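/- Milnor's Lobachevsky function Л(x) = -∫₀ˣ log|2 sin ξ| dξ is π-periodic: Л(x + π) = Л(x) for all x ∈ ℝ. -/

import Mathlib

/-- Milnor's Lobachevsky function. -/
noncomputable def lob (x : ℝ) : ℝ := -∫ ξ in (0:ℝ)..x, Real.log |2 * Real.sin ξ|

/-!
The integrand `log |2 sin ξ|` is `π`-periodic and locally integrable (`2 sin` is analytic, so
its logarithm only has integrable singularities), hence `∫₀^{x+π} = ∫₀^x + ∫₀^π`. The last
integral vanishes by Euler's evaluation `∫₀^π log (sin ξ) dξ = -π log 2`.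
-/

open Real MeasureTheory intervalIntegral
open scoped Interval

theorem periodic_log_abs_two_mul_sin : Function.Periodic (fun ξ ↦ log |2 * sin ξ|) π := by
  intro ξ
  simp only [sin_add_pi, mul_neg, abs_neg]

theorem intervalIntegrable_log_abs_two_mul_sin (a b : ℝ) :
    IntervalIntegrable (fun ξ ↦ log |2 * sin ξ|) volume a b :=
  (analyticOnNhd_const.mul analyticOnNhd_sin).meromorphicOn.intervalIntegrable_log_norm

theorem integral_log_abs_two_mul_sin_zero_pi : ∫ ξ in 0..π, log |2 * sin ξ| = 0 := by
  have h_ae : ∀ᵐ ξ ∂volume, ξ ∈ Ι 0 π → log |2 * sin ξ| = log 2 + log (sin ξ) := by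
    filter_upwards [(Set.countable_singleton π).ae_notMem volume] with ξ hξπ hξ
    rw [Set.uIoc_of_le pi_pos.le] at hξ
    have hsin : 0 < sin ξ := sin_pos_of_pos_of_lt_pi hξ.1 (lt_of_le_of_ne hξ.2 hξπ)
    rw [abs_of_pos (by positivity), log_mul two_ne_zero hsin.ne']
  rw [integral_congr_ae h_ae,
    integral_add (g := fun ξ ↦ log (sin ξ)) intervalIntegrable_const intervalIntegrable_log_sin,
    integral_log_sin_zero_pi, intervalIntegral.integral_const, sub_zero, smul_eq_mul]
  ring

/-- Milnor's Lobachevsky function is `π`-periodic. -/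
theorem lob_periodic (x : ℝ) : lob (x + Real.pi) = lob x := by
  rw [lob, lob, periodic_log_abs_two_mul_sin.intervalIntegral_add_eq_add 0 x
    intervalIntegrable_log_abs_two_mul_sin, zero_add, integral_log_abs_two_mul_sin_zero_pi,
    add_zero]
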